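/- arXiv:2302.09287 — 3 statements merged into one kernel-verified Lean document; each statement's English description precedes it below -/
import Mathlib

section
/- Let C > 0, K(φ) = 2φ³(1-φ)², and φ^eq(ξ) = (1/2)(1 + tanh(ξ/(C√2))). Then ∫_ℝ (4/C) K(φ^eq(ξ)) dξ = √2/3. In particular, with W(φ)=2φ²(1-φ)², ∫_ℝ (2/C)W(φ^eq) dξ = ∫_ℝ (4/C)K(φ^eq) dξ. -/
/-!
The profile solves `φ' = (√2 / C) φ (1 - φ)`, so `(4 / C) K(φ) = 4√2 φ² (1 - φ) φ'` and
`(2 / C) W(φ) = 2√2 φ (1 - φ) φ'`. Since `φ` maps `ℝ` bijectively onto `(0, 1)`, the substitution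
`y = φ(ξ)` turns both integrals into `4√2 ∫₀¹ y² (1 - y) dy = 2√2 ∫₀¹ y (1 - y) dy = √2 / 3`.
-/

noncomputable def W (φ : ℝ) : ℝ := 2 * φ ^ 2 * (1 - φ) ^ 2

noncomputable def K (φ : ℝ) : ℝ := 2 * φ ^ 3 * (1 - φ) ^ 2

noncomputable def phiEq (C ξ : ℝ) : ℝ := (1 + Real.tanh (ξ / (C * Real.sqrt 2))) / 2

open Real Set MeasureTheory

theorem Real.hasDerivAt_tanh (x : ℝ) : HasDerivAt tanh (1 - tanh x ^ 2) x := by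
  have h := (hasDerivAt_sinh x).div (hasDerivAt_cosh x) (cosh_pos x).ne'
  rw [show sinh / cosh = tanh from funext fun y => (tanh_eq_sinh_div_cosh y).symm] at h
  refine h.congr_deriv ?_
  rw [tanh_eq_sinh_div_cosh]
  field_simp

theorem hasDerivAt_phiEq (C ξ : ℝ) :
    HasDerivAt (phiEq C) (√2 / C * phiEq C ξ * (1 - phiEq C ξ)) ξ := by
  refine ((((hasDerivAt_tanh _).comp ξ
    ((hasDerivAt_id ξ).div_const (C * √2))).const_add 1).div_const 2).congr_deriv ?_
  rcases eq_or_ne C 0 with rfl | hC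
  · simp
  · simp only [phiEq, id]
    field_simp
    rw [sq_sqrt zero_le_two]
    ring

theorem phiEq_mem_Ioo (C ξ : ℝ) : phiEq C ξ ∈ Ioo 0 1 := by
  have := neg_one_lt_tanh (ξ / (C * √2))
  have := tanh_lt_one (ξ / (C * √2))
  constructor <;> simp only [phiEq] <;> linarith

section Substitution

variable {C : ℝ}

theorem range_phiEq (hC : C ≠ 0) : range (phiEq C) = Ioo 0 1 := by
  refine Subset.antisymm (range_subset_iff.2 (phiEq_mem_Ioo C)) fun y ⟨hy0, hy1⟩ => ?_
  refine ⟨C * √2 * artanh (2 * y - 1), ?_⟩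
  rw [phiEq, mul_div_cancel_left₀ _ (by positivity), tanh_artanh ⟨by linarith, by linarith⟩]
  ring

theorem phiEq_injective (hC : C ≠ 0) : Function.Injective (phiEq C) := by
  intro ξ η h
  have := tanh_injective (by simpa [phiEq] using h)
  rwa [div_left_inj' (by positivity)] at this

theorem integral_comp_phiEq_mul_deriv (hC : 0 < C) (g : ℝ → ℝ) :
    ∫ ξ, g (phiEq C ξ) * (√2 / C * phiEq C ξ * (1 - phiEq C ξ)) = ∫ y in (0 : ℝ)..1, g y := by
  rw [intervalIntegral.integral_of_le zero_le_one, integral_Ioc_eq_integral_Ioo,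
    ← range_phiEq hC.ne', ← image_univ,
    integral_image_eq_integral_abs_deriv_smul MeasurableSet.univ
      (fun ξ _ => (hasDerivAt_phiEq C ξ).hasDerivWithinAt) (phiEq_injective hC.ne').injOn,
    Measure.restrict_univ]
  refine integral_congr_ae (Filter.Eventually.of_forall fun ξ => ?_)
  obtain ⟨h0, h1⟩ := phiEq_mem_Ioo C ξ
  have hderiv : 0 < √2 / C * phiEq C ξ * (1 - phiEq C ξ) := by
    have : 0 < 1 - phiEq C ξ := sub_pos.2 h1
    positivity
  simp only [smul_eq_mul, abs_of_pos hderiv]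
  exact mul_comm _ _

end Substitution

theorem four_div_mul_K (C y : ℝ) :
    4 / C * K y = 4 * √2 * (y ^ 2 * (1 - y)) * (√2 / C * y * (1 - y)) := by
  rw [K]
  linear_combination (-4 / C * y ^ 3 * (1 - y) ^ 2) * mul_self_sqrt (zero_le_two (α := ℝ))

theorem two_div_mul_W (C y : ℝ) :
    2 / C * W y = 2 * √2 * (y * (1 - y)) * (√2 / C * y * (1 - y)) := by
  rw [W]
  linear_combination (-2 / C * y ^ 2 * (1 - y) ^ 2) * mul_self_sqrt (zero_le_two (α := ℝ))

theorem integral_sq_mul_one_sub : ∫ y in (0 : ℝ)..1, y ^ 2 * (1 - y) = 1 / 12 := by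
  simp only [show ∀ y : ℝ, y ^ 2 * (1 - y) = y ^ 2 - y ^ 3 from fun y => by ring]
  rw [intervalIntegral.integral_sub (by simp) (by simp)]
  norm_num [integral_pow]

theorem integral_mul_one_sub : ∫ y in (0 : ℝ)..1, y * (1 - y) = 1 / 6 := by
  simp only [show ∀ y : ℝ, y * (1 - y) = y - y ^ 2 from fun y => by ring]
  rw [intervalIntegral.integral_sub (by simp) (by simp)]
  norm_num [integral_pow]

theorem stmt_11 (C : ℝ) (hC : 0 < C) :
    (∫ ξ : ℝ, (4 / C) * K (phiEq C ξ)) = Real.sqrt 2 / 3 ∧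
    (∫ ξ : ℝ, (2 / C) * W (phiEq C ξ)) = ∫ ξ : ℝ, (4 / C) * K (phiEq C ξ) := by
  have hK : ∫ ξ : ℝ, (4 / C) * K (phiEq C ξ) = √2 / 3 := by
    simp only [four_div_mul_K]
    rw [integral_comp_phiEq_mul_deriv hC fun y => 4 * √2 * (y ^ 2 * (1 - y)),
      intervalIntegral.integral_const_mul, integral_sq_mul_one_sub]
    ring
  have hW : ∫ ξ : ℝ, (2 / C) * W (phiEq C ξ) = √2 / 3 := by
    simp only [two_div_mul_W]
    rw [integral_comp_phiEq_mul_deriv hC fun y => 2 * √2 * (y * (1 - y)),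
      intervalIntegral.integral_const_mul, integral_mul_one_sub]
    ring
  exact ⟨hK, hW.trans hK.symm⟩
end

section
/- Let Ψ : ℝ × ℝⁿ → ℝ be smooth and let φ : ℝⁿ → ℝ be smooth. Define μ(x) = ∂_φΨ(φ(x),∇φ(x)) - div(∂_{∇φ}Ψ(φ(x),∇φ(x))) and π(x) = φ(x)μ(x) - Ψ(φ(x),∇φ(x)). Then ∇π + div( ∇φ ⊗ ∂_{∇φ}Ψ(φ,∇φ) ) = φ ∇μ, where the divergence of the matrix field is taken row-wise. -/
open InnerProductSpace

/-- Divergence of a vector field on `EuclideanSpace ℝ (Fin n)`. -/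
noncomputable def divg {n : ℕ} (V : EuclideanSpace ℝ (Fin n) → EuclideanSpace ℝ (Fin n))
    (x : EuclideanSpace ℝ (Fin n)) : ℝ :=
  ∑ i, fderiv ℝ V x (EuclideanSpace.single i 1) i

private lemma st13_gradient_def {n : ℕ} (f : EuclideanSpace ℝ (Fin n) → ℝ)
    (x : EuclideanSpace ℝ (Fin n)) :
    gradient f x = (InnerProductSpace.toDual ℝ _).symm (fderiv ℝ f x) := rfl

private lemma st13_coord {n : ℕ} (L : (EuclideanSpace ℝ (Fin n)) →L[ℝ] ℝ) (j : Fin n) :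
    (InnerProductSpace.toDual ℝ _).symm L j = L (EuclideanSpace.single j 1) := by
  have h := InnerProductSpace.toDual_symm_apply (𝕜 := ℝ) (y := L) (x := EuclideanSpace.single j 1)
  rw [EuclideanSpace.inner_single_right] at h
  simpa using h

private lemma st13_grad_apply {n : ℕ} (f : EuclideanSpace ℝ (Fin n) → ℝ)
    (x : EuclideanSpace ℝ (Fin n)) (i : Fin n) :
    gradient f x i = fderiv ℝ f x (EuclideanSpace.single i 1) :=
  st13_coord (fderiv ℝ f x) i

private lemma st13_decomp {n : ℕ} (v : EuclideanSpace ℝ (Fin n)) :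
    v = ∑ j, v j • EuclideanSpace.single j 1 := by
  ext k
  simp [WithLp.ofLp_sum, EuclideanSpace.single_apply, Pi.single_apply]

theorem stmt_13 (n : ℕ)
    (Ψ : ℝ × EuclideanSpace ℝ (Fin n) → ℝ) (hΨ : ContDiff ℝ (⊤ : ℕ∞) Ψ)
    (φ : EuclideanSpace ℝ (Fin n) → ℝ) (hφ : ContDiff ℝ (⊤ : ℕ∞) φ)
    (μ π : EuclideanSpace ℝ (Fin n) → ℝ)
    (hμ : ∀ x, μ x = deriv (fun s => Ψ (s, gradient φ x)) (φ x)
        - divg (fun y => gradient (fun g => Ψ (φ y, g)) (gradient φ y)) x)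
    (hπ : ∀ x, π x = φ x * μ x - Ψ (φ x, gradient φ x)) :
    ∀ x i, gradient π x i
        + divg (fun y => (gradient φ y i) • gradient (fun g => Ψ (φ y, g)) (gradient φ y)) x
      = φ x * gradient μ x i := by
  classical
  intro x i
  set ξ : EuclideanSpace ℝ (Fin n) → EuclideanSpace ℝ (Fin n) :=
    fun y => gradient (fun g => Ψ (φ y, g)) (gradient φ y) with hξdef
  set P : EuclideanSpace ℝ (Fin n) → ℝ × EuclideanSpace ℝ (Fin n) :=
    fun y => (φ y, gradient φ y) with hPdef
  -- smoothness of gradient of φ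
  have hgφ : ContDiff ℝ (⊤ : ℕ∞) (fun y => gradient φ y) := by
    have h : (fun y => gradient φ y)
        = (fun L => (InnerProductSpace.toDual ℝ (EuclideanSpace ℝ (Fin n))).symm L)
          ∘ (fderiv ℝ φ) := rfl
    rw [h]
    exact ((InnerProductSpace.toDual ℝ _).symm.contDiff).comp (hφ.fderiv_right (by simp))
  have hP : ContDiff ℝ (⊤ : ℕ∞) P := ContDiff.prodMk hφ hgφ
  have hDΨP : ContDiff ℝ (⊤ : ℕ∞) (fun y => fderiv ℝ Ψ (P y)) := (hΨ.fderiv_right (by simp)).comp hP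
  -- formula for ξ
  have hξeq : ∀ y, ξ y = (InnerProductSpace.toDual ℝ _).symm
      ((fderiv ℝ Ψ (P y)).comp (ContinuousLinearMap.inr ℝ ℝ (EuclideanSpace ℝ (Fin n)))) := by
    intro y
    have hb : HasFDerivAt (fun g : EuclideanSpace ℝ (Fin n) => Ψ (φ y, g))
        ((fderiv ℝ Ψ (P y)).comp (ContinuousLinearMap.inr ℝ ℝ _)) (gradient φ y) :=
      (((hΨ.differentiable (by simp)) (P y)).hasFDerivAt).comp (gradient φ y)
        (hasFDerivAt_prodMk_right (φ y) (gradient φ y))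
    show gradient (fun g => Ψ (φ y, g)) (gradient φ y) = _
    rw [st13_gradient_def, hb.fderiv]
  have hξs : ContDiff ℝ (⊤ : ℕ∞) ξ := by
    have h : ξ = (fun L => (InnerProductSpace.toDual ℝ (EuclideanSpace ℝ (Fin n))).symm L) ∘
        (fun y => (fderiv ℝ Ψ (P y)).comp (ContinuousLinearMap.inr ℝ ℝ _)) := funext hξeq
    rw [h]
    exact ((InnerProductSpace.toDual ℝ _).symm.contDiff).comp (hDΨP.clm_comp contDiff_const)
  have hξ0 : ∀ y j, ξ y j = fderiv ℝ Ψ (P y) (0, EuclideanSpace.single j 1) := by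
    intro y j
    rw [hξeq y, st13_coord]
    simp
  -- formula for μ
  have hμ' : ∀ y, μ y = fderiv ℝ Ψ (P y) (1, 0) - divg ξ y := by
    intro y
    rw [hμ y]
    congr 1
    have hb : HasFDerivAt (fun s : ℝ => Ψ (s, gradient φ y))
        ((fderiv ℝ Ψ (P y)).comp (ContinuousLinearMap.inl ℝ ℝ _)) (φ y) :=
      (((hΨ.differentiable (by simp)) (P y)).hasFDerivAt).comp (φ y)
        (hasFDerivAt_prodMk_left (φ y) (gradient φ y))
    rw [hb.hasDerivAt.deriv]
    simp
  -- smoothness of divg ξ and of μ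
  have hdvξ : ContDiff ℝ (⊤ : ℕ∞) (fun y => divg ξ y) := by
    unfold divg
    apply ContDiff.sum
    intro j _
    have h1 : ContDiff ℝ (⊤ : ℕ∞) (fun y => fderiv ℝ ξ y (EuclideanSpace.single j 1)) :=
      (hξs.fderiv_right (by simp)).clm_apply contDiff_const
    exact (EuclideanSpace.proj j).contDiff.comp h1
  have hμs : ContDiff ℝ (⊤ : ℕ∞) μ := by
    have h : μ = fun y => fderiv ℝ Ψ (P y) (1, 0) - divg ξ y := funext hμ'
    rw [h]
    exact (hDΨP.clm_apply contDiff_const).sub hdvξ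
  -- second derivative of φ and symmetry
  set H : EuclideanSpace ℝ (Fin n) →L[ℝ] EuclideanSpace ℝ (Fin n) :=
    fderiv ℝ (fun y => gradient φ y) x with hHdef
  have hHcoord : ∀ (v : EuclideanSpace ℝ (Fin n)) j,
      H v j = fderiv ℝ (fderiv ℝ φ) x v (EuclideanSpace.single j 1) := by
    intro v j
    have hcomp : (fun y => gradient φ y)
        = ⇑(InnerProductSpace.toDual ℝ (EuclideanSpace ℝ (Fin n))).symm ∘ (fderiv ℝ φ) := rfl
    rw [hHdef, hcomp, (InnerProductSpace.toDual ℝ _).symm.comp_fderiv]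
    rw [ContinuousLinearMap.comp_apply]
    exact st13_coord _ j
  have hsymm : ∀ j, H (EuclideanSpace.single j 1) i = H (EuclideanSpace.single i 1) j := by
    intro j
    have h2 : IsSymmSndFDerivAt ℝ φ x :=
      hφ.contDiffAt.isSymmSndFDerivAt (by rw [minSmoothness_of_isRCLikeNormedField]; exact WithTop.coe_le_coe.mpr le_top)
    rw [hHcoord, hHcoord]
    exact h2 _ _
  -- differentiability at x
  have dφx : DifferentiableAt ℝ φ x := hφ.differentiable (by simp) x
  have dμx : DifferentiableAt ℝ μ x := hμs.differentiable (by simp) x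
  have dξx : DifferentiableAt ℝ ξ x := hξs.differentiable (by simp) x
  have dPx : DifferentiableAt ℝ P x := hP.differentiable (by simp) x
  have dΨPx : DifferentiableAt ℝ Ψ (P x) := (hΨ.differentiable (by simp)) (P x)
  -- derivative of P at x
  have hPd : fderiv ℝ P x = (fderiv ℝ φ x).prod H := by
    rw [hHdef]
    exact (((hφ.differentiable (by simp) x).hasFDerivAt).prodMk
      ((hgφ.differentiable (by simp) x).hasFDerivAt)).fderiv
  -- expansion of A (0, v)
  have expand : ∀ v : EuclideanSpace ℝ (Fin n), fderiv ℝ Ψ (P x) ((0 : ℝ), v)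
      = ∑ j, v j * ξ x j := by
    intro v
    conv_lhs => rw [st13_decomp v]
    have h1 : ((0 : ℝ), ∑ j, v j • (EuclideanSpace.single j 1 : EuclideanSpace ℝ (Fin n)))
        = ∑ j, v j • ((0 : ℝ), (EuclideanSpace.single j 1 : EuclideanSpace ℝ (Fin n))) := by
      apply Prod.ext <;> simp [Prod.fst_sum, Prod.snd_sum]
    rw [h1, map_sum]
    refine Finset.sum_congr rfl fun j _ => ?_
    rw [hξ0 x j, map_smul]
    simp
  -- chain rule for Ψ ∘ P
  have hchain : fderiv ℝ (fun y => Ψ (φ y, gradient φ y)) x (EuclideanSpace.single i 1)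
      = fderiv ℝ φ x (EuclideanSpace.single i 1) * fderiv ℝ Ψ (P x) (1, 0)
        + ∑ j, H (EuclideanSpace.single i 1) j * ξ x j := by
    have hc : fderiv ℝ (fun y => Ψ (φ y, gradient φ y)) x
        = (fderiv ℝ Ψ (P x)).comp (fderiv ℝ P x) := fderiv_comp x dΨPx dPx
    rw [hc, hPd]
    rw [ContinuousLinearMap.comp_apply, ContinuousLinearMap.prod_apply]
    have hsplit : ((fderiv ℝ φ x (EuclideanSpace.single i 1)), H (EuclideanSpace.single i 1))
        = fderiv ℝ φ x (EuclideanSpace.single i 1) • ((1 : ℝ), (0 : EuclideanSpace ℝ (Fin n)))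
          + ((0 : ℝ), H (EuclideanSpace.single i 1)) := by
      apply Prod.ext <;> simp
    rw [hsplit, map_add, map_smul, expand]
    simp
  -- gradient of π at x in direction i
  have hπfun : π = fun y => φ y * μ y - Ψ (φ y, gradient φ y) := funext hπ
  have hπi : gradient π x i
      = φ x * gradient μ x i + μ x * fderiv ℝ φ x (EuclideanSpace.single i 1)
        - (fderiv ℝ φ x (EuclideanSpace.single i 1) * fderiv ℝ Ψ (P x) (1, 0)
            + ∑ j, H (EuclideanSpace.single i 1) j * ξ x j) := by
    rw [st13_grad_apply, st13_grad_apply μ x i, hπfun]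
    have dcomp : DifferentiableAt ℝ (fun y => Ψ (φ y, gradient φ y)) x := dΨPx.comp x dPx
    rw [fderiv_fun_sub (f := fun y => φ y * μ y) (dφx.mul dμx) dcomp]
    rw [ContinuousLinearMap.sub_apply, fderiv_fun_mul dφx dμx]
    rw [ContinuousLinearMap.add_apply, ContinuousLinearMap.smul_apply,
      ContinuousLinearMap.smul_apply, hchain]
    simp [smul_eq_mul]
  -- divergence of the tensor term
  have hcd : fderiv ℝ (fun y => gradient φ y i) x = (EuclideanSpace.proj i (𝕜 := ℝ)).comp H := by
    rw [hHdef]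
    exact (((EuclideanSpace.proj i (𝕜 := ℝ)).hasFDerivAt).comp x
      ((hgφ.differentiable (by simp) x).hasFDerivAt)).fderiv
  have hcdiff : DifferentiableAt ℝ (fun y => gradient φ y i) x :=
    (((EuclideanSpace.proj i (𝕜 := ℝ)).contDiff.comp hgφ).differentiable (by simp)) x
  have hdivW : divg (fun y => gradient φ y i • ξ y) x
      = (∑ j, H (EuclideanSpace.single j 1) i * ξ x j)
        + gradient φ x i * divg ξ x := by
    unfold divg
    rw [Finset.mul_sum, ← Finset.sum_add_distrib]
    refine Finset.sum_congr rfl fun j _ => ?_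
    rw [fderiv_fun_smul hcdiff dξx]
    rw [ContinuousLinearMap.add_apply, ContinuousLinearMap.smul_apply,
      ContinuousLinearMap.smulRight_apply, hcd]
    simp [smul_eq_mul, mul_comm]
    ring
  -- put everything together
  rw [hπi, hdivW, hμ' x, st13_grad_apply φ x i]
  have hSS : (∑ j, H (EuclideanSpace.single j 1) i * ξ x j)
      = ∑ j, H (EuclideanSpace.single i 1) j * ξ x j :=
    Finset.sum_congr rfl fun j _ => by rw [hsymm j]
  rw [hSS]
  ring
end

section
/- Let N ≥ 2, wα ∈ ℝⁿ for α = 1,…,N, v ∈ ℝⁿ, γ̂α ∈ ℝ for α = 1,…,N-1 with γ̂_N = -∑_{α<N} γ̂α. Define βα = (1/2)γ̂α(wα + w_N + 2v) for α ≤ N-1 and β_N = -∑_{α<N} βα. Then ∑_{α=1}^{N} wα · ( βα - γ̂α((1/2)wα + v) ) = 0. -/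
/-!
For `α < N` the vector `β α - γ α • (½ w α + v)` collapses to `(γ α / 2) • w N`, and for the last
index to `-∑ α < N, (γ α / 2) • w α`; the resulting inner products cancel pairwise by symmetry of
the inner product.
-/

open Finset

section Module

variable {E : Type*} [AddCommGroup E] [Module ℝ E]

lemma half_mul_smul_add_add_two_smul_sub (c : ℝ) (x y v : E) :
    ((1 : ℝ) / 2 * c) • (x + y + (2 : ℝ) • v) - c • ((2 : ℝ)⁻¹ • x + v) = ((2 : ℝ)⁻¹ * c) • y := by
  module

lemma neg_sum_half_mul_smul_add_add_two_smul_sub {ι : Type*} (s : Finset ι) (c : ι → ℝ)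
    (x : ι → E) (y v : E) :
    -∑ α ∈ s, ((1 : ℝ) / 2 * c α) • (x α + y + (2 : ℝ) • v) - (-∑ α ∈ s, c α) • ((2 : ℝ)⁻¹ • y + v)
      = -∑ α ∈ s, ((2 : ℝ)⁻¹ * c α) • x α := by
  rw [neg_smul, sum_smul, sub_neg_eq_add, neg_add_eq_sub, ← sum_sub_distrib, ← sum_neg_distrib]
  refine sum_congr rfl fun α _ => ?_
  module

end Module

lemma sum_inner_smul_add_inner_neg_sum_smul {E ι : Type*} [NormedAddCommGroup E]
    [InnerProductSpace ℝ E] (s : Finset ι) (a : ι → ℝ) (x : ι → E) (y : E) :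
    ∑ α ∈ s, inner ℝ (x α) (a α • y) + inner ℝ y (-∑ α ∈ s, a α • x α) = 0 := by
  simp only [inner_neg_right, inner_sum, inner_smul_right, real_inner_comm y, add_neg_cancel]

theorem stmt_17_general (n N : ℕ)
    (w : Fin (N + 1) → EuclideanSpace ℝ (Fin n)) (v : EuclideanSpace ℝ (Fin n))
    (γ : Fin (N + 1) → ℝ)
    (hγN : γ (Fin.last N) = -∑ α : Fin N, γ α.castSucc)
    (β : Fin (N + 1) → EuclideanSpace ℝ (Fin n))
    (hβ : ∀ α : Fin N, β α.castSucc
      = ((1 : ℝ) / 2 * γ α.castSucc) • (w α.castSucc + w (Fin.last N) + (2 : ℝ) • v))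
    (hβN : β (Fin.last N) = -∑ α : Fin N, β α.castSucc) :
    ∑ α, (inner ℝ (w α) (β α - γ α • ((2 : ℝ)⁻¹ • w α + v)) : ℝ) = 0 := by
  have h_lt : ∀ α : Fin N, β α.castSucc - γ α.castSucc • ((2 : ℝ)⁻¹ • w α.castSucc + v)
      = ((2 : ℝ)⁻¹ * γ α.castSucc) • w (Fin.last N) := fun α => by
    rw [hβ α, half_mul_smul_add_add_two_smul_sub]
  have h_last : β (Fin.last N) - γ (Fin.last N) • ((2 : ℝ)⁻¹ • w (Fin.last N) + v)
      = -∑ α : Fin N, ((2 : ℝ)⁻¹ * γ α.castSucc) • w α.castSucc := by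
    simp only [hβN, hγN, hβ]
    exact neg_sum_half_mul_smul_add_add_two_smul_sub _ _ _ _ _
  rw [Fin.sum_univ_castSucc, h_last]
  simp only [h_lt]
  exact sum_inner_smul_add_inner_neg_sum_smul _ _ _ _

theorem stmt_17 (n N : ℕ) (hN : 1 ≤ N)
    (w : Fin (N + 1) → EuclideanSpace ℝ (Fin n)) (v : EuclideanSpace ℝ (Fin n))
    (γ : Fin (N + 1) → ℝ)
    (hγN : γ (Fin.last N) = -∑ α : Fin N, γ α.castSucc)
    (β : Fin (N + 1) → EuclideanSpace ℝ (Fin n))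
    (hβ : ∀ α : Fin N, β α.castSucc
      = ((1 : ℝ) / 2 * γ α.castSucc) • (w α.castSucc + w (Fin.last N) + (2 : ℝ) • v))
    (hβN : β (Fin.last N) = -∑ α : Fin N, β α.castSucc) :
    ∑ α, (inner ℝ (w α) (β α - γ α • ((2 : ℝ)⁻¹ • w α + v)) : ℝ) = 0 :=
  stmt_17_general n N w v γ hγN β hβ hβN
end
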